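/- arXiv:1501.01918 — 2 statements merged into one kernel-verified Lean document; each statement's English description precedes it below -/
import Mathlib

section
/- Let f : X → X be a function on a set X equipped with a well-order <. Define a simple graph G on X whose edges are the pairs {x, f(x)} for those x with x < f(x). Then every vertex of G has at most one neighbor above itself in <, and consequently G is acyclic; moreover, if a < f(a), then in the connected component of a, the distances from a and from f(a) to the <-least element of that component have different parities. -/
/-!
A cycle has two distinct neighbours of its `<`-least vertex on it, both above that vertex;
since `x` can only be joined to a larger vertex by the edge `{x, f x}`, the graph is a forest.
In a forest, the distances from any vertex of a component to the two ends of an edge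
differ by exactly one.
-/

namespace SimpleGraph

variable {V : Type*} {G : SimpleGraph V}

theorem isAcyclic_of_lt_adj_unique [LinearOrder V] [WellFoundedLT V]
    (h : ∀ x y z : V, G.Adj x y → G.Adj x z → x < y → x < z → y = z) : G.IsAcyclic := by
  intro v c hc
  obtain ⟨m, hm, hmin⟩ := wellFounded_lt.has_min {z | z ∈ c.support} ⟨v, c.start_mem_support⟩
  have hc' := hc.rotate hm
  set c' := c.rotate m hm
  have lt_of_adj : ∀ i, G.Adj m (c'.getVert i) → m < c'.getVert i := fun i hadj =>
    lt_of_le_of_ne (not_lt.1 <| hmin _ <| (c.mem_support_rotate_iff m hm).1 <|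
      c'.getVert_mem_support i) hadj.ne
  have hsnd := c'.adj_snd hc'.not_nil
  have hpen := (c'.adj_penultimate hc'.not_nil).symm
  exact hc'.snd_ne_penultimate <| h m _ _ hsnd hpen (lt_of_adj _ hsnd) (lt_of_adj _ hpen)

theorem IsAcyclic.even_dist_iff_not_even_dist_of_adj (hG : G.IsAcyclic) {u v w : V}
    (hadj : G.Adj v w) (hreach : G.Reachable u v) :
    Even (G.dist v u) ↔ ¬ Even (G.dist w u) := by
  rw [dist_comm, dist_comm (u := w)]
  rcases hG.dist_eq_dist_add_one_of_adj_of_reachable u hadj hreach with h | h <;>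
    simp [h, Nat.even_add_one]

end SimpleGraph

/-- Given `f : X → X` on a well-ordered set, the graph with edges `{x, f x}` for `x < f x`
has at most one neighbor above each vertex, hence is acyclic; moreover if `a < f a`,
then the distances from `a` and from `f a` to the least element of their connected
component have different parities. -/
theorem stmt7 {X : Type*} [LinearOrder X] [WellFoundedLT X] (f : X → X)
    (G : SimpleGraph X)
    (hG : ∀ x y : X, G.Adj x y ↔ ((y = f x ∧ x < y) ∨ (x = f y ∧ y < x))) (a : X) :
    (∀ x y z : X, G.Adj x y → G.Adj x z → x < y → x < z → y = z) ∧
    G.IsAcyclic ∧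
    (a < f a → ∀ c : X, (G.Reachable c a ∧ ∀ d : X, G.Reachable d a → c ≤ d) →
      (Even (G.dist a c) ↔ ¬ Even (G.dist (f a) c))) := by
  have upper_unique : ∀ x y z : X, G.Adj x y → G.Adj x z → x < y → x < z → y = z := by
    intro x y z hxy hxz hy hz
    rcases (hG x y).1 hxy with ⟨rfl, -⟩ | ⟨-, hyx⟩
    · rcases (hG x z).1 hxz with ⟨rfl, -⟩ | ⟨-, hzx⟩
      · rfl
      · exact absurd hzx hz.not_gt
    · exact absurd hyx hy.not_gt
  have acyclic := SimpleGraph.isAcyclic_of_lt_adj_unique upper_unique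
  refine ⟨upper_unique, acyclic, fun haf c ⟨hca, _⟩ => ?_⟩
  exact acyclic.even_dist_iff_not_even_dist_of_adj ((hG a (f a)).2 (.inl ⟨rfl, haf⟩)) hca
end

section
/- Let M be a first-order structure with a parameter-free definable pairing function (an injective definable map p : M × M → M such that both coordinates are definable from the pair). If M satisfies Ehrenfeucht's lemma (whenever b ≠ a is parameter-free definable from a, the types of a and b over ∅ differ), then M satisfies the parametric version: whenever b ≠ a is definable from a using an additional parameter q, the types of a and b over {q} differ. -/
/-!
Fold the parameter into the element: put `a' = p a q` and `b' = p b q`. Then `b' ≠ a'`, and `b'` is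
definable from `a'` without parameters, by decoding `a'` into `(a, q)`, defining `b` from them and
re-encoding `b` with the same `q`. Ehrenfeucht's lemma gives a formula `ψ` true of `a'` and false
of `b'`, and `ψ(p x q)` is then a formula in `x` and `q` that separates `a` from `b`.
-/

open FirstOrder Language

theorem Matrix.comp_vecCons {α β : Type*} {n : ℕ} (f : α → β) (a : α) (v : Fin n → α) :
    f ∘ Matrix.vecCons a v = Matrix.vecCons (f a) (f ∘ v) :=
  Fin.comp_cons f a v

namespace FirstOrder.Language

variable {L : Language} {M : Type*} [L.Structure M] {p : M → M → M} {φp : L.Formula (Fin 3)}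

theorem exists_formula_realize_iff_realize_apply
    (hp : ∀ x y z : M, φp.Realize ![x, y, z] ↔ z = p x y) (ψ : L.Formula (Fin 1)) :
    ∃ χ : L.Formula (Fin 2), ∀ x y : M, χ.Realize ![x, y] ↔ ψ.Realize ![p x y] := by
  -- `χ(x, y) := ∃ z, φp(x, y, z) ∧ ψ(z)`
  refine ⟨Formula.iExs (Fin 1)
    (φp.relabel ![Sum.inl 0, Sum.inl 1, Sum.inr 0] ⊓ ψ.relabel ![Sum.inr 0]), fun x y => ?_⟩
  simp [Formula.realize_iExs, Formula.realize_relabel, Matrix.comp_vecCons, Matrix.empty_eq,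
    Fin.exists_fin_succ_pi, hp]

theorem exists_formula_realize_apply_iff_exists
    (hp : ∀ x y z : M, φp.Realize ![x, y, z] ↔ z = p x y) (hinj : Function.Injective2 p)
    (φ : L.Formula (Fin 3)) :
    ∃ χ : L.Formula (Fin 2), ∀ x a q : M,
      χ.Realize ![x, p a q] ↔ ∃ b, φ.Realize ![b, a, q] ∧ x = p b q := by
  -- `χ(x, y) := ∃ u v w, φp(u, v, y) ∧ φ(w, u, v) ∧ φp(w, v, x)`;
  -- injectivity of `p` forces `(u, v) = (a, q)` when `y = p a q`
  refine ⟨Formula.iExs (Fin 3)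
    (φp.relabel ![Sum.inr 0, Sum.inr 1, Sum.inl 1] ⊓
      (φ.relabel ![Sum.inr 2, Sum.inr 0, Sum.inr 1] ⊓
        φp.relabel ![Sum.inr 2, Sum.inr 1, Sum.inl 0])), fun x a q => ?_⟩
  simp [Formula.realize_iExs, Formula.realize_relabel, Matrix.comp_vecCons, Matrix.empty_eq,
    Fin.exists_fin_succ_pi, hp, hinj.eq_iff]

end FirstOrder.Language

/-- If `M` has a parameter-free definable pairing function and satisfies Ehrenfeucht's
lemma (parameter-free definability implies discernibility), then the parametric
version holds: if `b ≠ a` is definable from `a` with a parameter `q`, then the types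
of `a` and `b` over `{q}` differ. -/
theorem stmt8 {L : Language} {M : Type*} [L.Structure M]
    (p : M → M → M)
    (φp : L.Formula (Fin 3))
    (hp : ∀ x y z : M, φp.Realize ![x, y, z] ↔ z = p x y)
    (hinj : ∀ x y x' y' : M, p x y = p x' y' → x = x' ∧ y = y')
    (hEL : ∀ a b : M, b ≠ a →
      (∃ φ : L.Formula (Fin 2), ∀ x : M, φ.Realize ![x, a] ↔ x = b) →
      ∃ ψ : L.Formula (Fin 1), ψ.Realize ![a] ∧ ¬ ψ.Realize ![b]) :
    ∀ a b q : M, b ≠ a →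
      (∃ φ : L.Formula (Fin 3), ∀ x : M, φ.Realize ![x, a, q] ↔ x = b) →
      ∃ ψ : L.Formula (Fin 2), ψ.Realize ![a, q] ∧ ¬ ψ.Realize ![b, q] := by
  intro a b q hba ⟨φ, hφ⟩
  have hinj₂ : Function.Injective2 p := fun x x' y y' h => hinj x y x' y' h
  obtain ⟨χ, hχ⟩ := exists_formula_realize_apply_iff_exists hp hinj₂ φ
  obtain ⟨ψ, hψa, hψb⟩ :=
    hEL (p a q) (p b q) (fun h => hba (hinj₂ h).1) ⟨χ, fun x => by simp [hχ, hφ]⟩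
  obtain ⟨θ, hθ⟩ := exists_formula_realize_iff_realize_apply hp ψ
  exact ⟨θ, (hθ a q).2 hψa, fun h => hψb ((hθ b q).1 h)⟩
end
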